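/- Let p ≥ 1, n ≥ 2p, and let g be a directed graph on {1,…,n} with p edges whose 2p endpoints are pairwise distinct, no loops, and such that at least one pair of edges forms a 2-cycle, i.e. there exist distinct a,b with both (a,b) and (b,a) edges of g. If σ_n is a conjugation-invariant random permutation of {1,…,n}, then P(σ_n ∈ S_{n,g}) ≤ P(c_1(σ_n)=2)/( C(n−p, p)·p! ), where c_1(σ) is the length of the cycle of σ containing 1. -/

import Mathlib

open ENNReal Function Equiv MeasureTheory

/-!
Conjugate so that the head `y i` of a 2-cycle `i ∈ D` is `0`. For every injection `e` of the `p`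
tails into the `n - p` points off `range y`, the graph with the same heads and tails `e` is
conjugate to `g`, so by conjugation invariance `σ ∈ S_{n,g_e}` has the same probability as
`σ ∈ S_{n,g}`. These `(n - p)! / (n - 2p)! = C(n - p, p) p!` events are disjoint, since `σ`
recovers the tails as `σ⁻¹` of the heads, and each of them makes `σ` swap `y i` and `e i`,
so `c_{y i}(σ) = 2`.
-/

lemma Function.minimalPeriod_eq_two {α : Type*} {f : α → α} {a b : α}
    (hab : f a = b) (hba : f b = a) (hne : a ≠ b) : minimalPeriod f a = 2 :=
  minimalPeriod_eq_prime (by simp [IsPeriodicPt, IsFixedPt, hab, hba])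
    (by simpa [IsFixedPt, hab] using hne.symm)

namespace PMF

variable {α : Type*} (μ : PMF α)

lemma toOuterMeasure_preimage_of_map_eq {f : α → α} (hf : μ.map f = μ) (s : Set α) :
    μ.toOuterMeasure (f ⁻¹' s) = μ.toOuterMeasure s := by
  rw [← toOuterMeasure_map_apply, hf]

lemma sum_toOuterMeasure_le_of_pairwise_disjoint {ι : Type*} [Fintype ι] {E : ι → Set α}
    {T : Set α} (hE : Pairwise (Disjoint on E)) (hT : ∀ i, E i ⊆ T) :
    ∑ i, μ.toOuterMeasure (E i) ≤ μ.toOuterMeasure T := by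
  let _ : MeasurableSpace α := ⊤
  simp_rw [← μ.toMeasure_apply_eq_toOuterMeasure]
  rw [← measure_biUnion_finset (hE.set_pairwise _) fun _ _ => MeasurableSpace.measurableSet_top]
  exact measure_mono (Set.iUnion₂_subset fun i _ => hT i)

end PMF

namespace Equiv.Perm

variable {α ι : Type*}

/-- `S_{n,g}` for the graph `g` with edges `x i → y i`, and also `y i → x i` when `i ∈ D`. -/
def graphPerms (D : Finset ι) (x y : ι → α) : Set (Perm α) :=
  {σ | ∀ i, σ (x i) = y i ∧ (i ∈ D → σ (y i) = x i)}

lemma preimage_conj_graphPerms (D : Finset ι) (x y : ι → α) (τ : Perm α) :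
    (fun σ => τ⁻¹ * σ * τ) ⁻¹' graphPerms D x y = graphPerms D (τ ∘ x) (τ ∘ y) := by
  ext σ
  simp [graphPerms, symm_apply_eq]

lemma toOuterMeasure_graphPerms_eq [Finite ι] {μ : PMF (Perm α)}
    (hμ : ∀ τ : Perm α, μ.map (fun σ => τ⁻¹ * σ * τ) = μ) (D : Finset ι)
    {x y x' y' : ι → α} (hxy : Injective (Sum.elim x y)) (hxy' : Injective (Sum.elim x' y')) :
    μ.toOuterMeasure (graphPerms D x' y') = μ.toOuterMeasure (graphPerms D x y) := by
  obtain ⟨τ, hτ⟩ := exists_extending_pair _ _ hxy hxy'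
  have hx : τ ∘ x = x' := funext fun i => hτ (.inl i)
  have hy : τ ∘ y = y' := funext fun i => hτ (.inr i)
  rw [← hx, ← hy, ← preimage_conj_graphPerms, μ.toOuterMeasure_preimage_of_map_eq (hμ τ)]

lemma disjoint_graphPerms {D : Finset ι} {x x' y : ι → α} (h : x ≠ x') :
    _root_.Disjoint (graphPerms D x y) (graphPerms D x' y) := by
  refine Set.disjoint_left.2 fun σ hσ hσ' => h (funext fun i => σ.injective ?_)
  rw [(hσ i).1, (hσ' i).1]

lemma graphPerms_subset_minimalPeriod_eq_two {D : Finset ι} {x y : ι → α} {i : ι}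
    (hi : i ∈ D) (hxy : x i ≠ y i) :
    graphPerms D x y ⊆ {σ | minimalPeriod σ (y i) = 2} :=
  fun _ hσ => minimalPeriod_eq_two ((hσ i).2 hi) (hσ i).1 hxy.symm

lemma card_embedding_compl_range [Fintype ι] [Fintype α] [DecidableEq α] {y : ι → α}
    (hy : Injective y) :
    Fintype.card (ι ↪ ((Set.range y)ᶜ : Set α)) =
      (Fintype.card α - Fintype.card ι).descFactorial (Fintype.card ι) := by
  rw [Fintype.card_embedding_eq, Fintype.card_compl_set, Set.card_range_of_injective hy]

lemma card_embedding_mul_toOuterMeasure_graphPerms_le [Fintype ι] [Fintype α] [DecidableEq α]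
    {μ : PMF (Perm α)} (hμ : ∀ τ : Perm α, μ.map (fun σ => τ⁻¹ * σ * τ) = μ)
    {D : Finset ι} {x y : ι → α} (hxy : Injective (Sum.elim x y)) {i : ι} (hi : i ∈ D) :
    Fintype.card (ι ↪ ((Set.range y)ᶜ : Set α)) * μ.toOuterMeasure (graphPerms D x y)
      ≤ μ.toOuterMeasure {σ | minimalPeriod σ (y i) = 2} := by
  let v (e : ι ↪ ((Set.range y)ᶜ : Set α)) (j : ι) : α := e j
  have hv_ne (e) (j k : ι) : v e j ≠ y k := fun h => (e j).2 ⟨k, h.symm⟩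
  have hv (e) : Injective (Sum.elim (v e) y) :=
    (Subtype.val_injective.comp e.injective).sumElim (hxy.comp Sum.inr_injective) (hv_ne e)
  calc _ = ∑ e, μ.toOuterMeasure (graphPerms D (v e) y) := by
        simp [toOuterMeasure_graphPerms_eq hμ D hxy (hv _)]
    _ ≤ _ := μ.sum_toOuterMeasure_le_of_pairwise_disjoint
        (fun e e' hne => disjoint_graphPerms fun h => hne (Embedding.ext fun j =>
          Subtype.ext (congrFun h j)))
        fun e => graphPerms_subset_minimalPeriod_eq_two hi (hv_ne e i i)

end Equiv.Perm

/-- `g` is a graph whose nontrivial connected components are indexed by `Fin p`,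
the `i`-th component having the two distinct vertices `x i`, `y i`; it always has
the edge `(x i, y i)`, and additionally the edge `(y i, x i)` when `i ∈ D`
(so the components indexed by `D` are 2-cycles).  If `D` is nonempty (at least one
2-cycle), then for any conjugation-invariant random permutation,
`P(σ ∈ S_{n,g}) ≤ P(c_1(σ) = 2) / (C(n-p,p) p!)`. -/
theorem stmt13 {n p : ℕ} (hp : 1 ≤ p) (hn : 2 * p ≤ n)
    (x y : Fin p → Fin n)
    (hinj : Function.Injective (Sum.elim x y : Fin p ⊕ Fin p → Fin n))
    (D : Finset (Fin p)) (hD : D.Nonempty)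
    (μ : PMF (Equiv.Perm (Fin n)))
    (hinv : ∀ τ : Equiv.Perm (Fin n), μ.map (fun σ => τ⁻¹ * σ * τ) = μ) :
    μ.toOuterMeasure {σ | ∀ i : Fin p, σ (x i) = y i ∧ (i ∈ D → σ (y i) = x i)}
      ≤ μ.toOuterMeasure
          {σ | Function.minimalPeriod (⇑σ) (⟨0, by omega⟩ : Fin n) = 2}
        / (((n - p).choose p : ℝ≥0∞) * (p.factorial : ℝ≥0∞)) := by
  classical
  obtain ⟨i, hi⟩ := hD
  set τ := swap (y i) ⟨0, by omega⟩
  have hτ : Injective (Sum.elim (τ ∘ x) (τ ∘ y)) := by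
    rw [← Sum.comp_elim]
    exact τ.injective.comp hinj
  have hcard : (Fintype.card (Fin p ↪ ((Set.range (τ ∘ y))ᶜ : Set (Fin n))) : ℝ≥0∞) =
      (n - p).choose p * p.factorial := by
    rw [Perm.card_embedding_compl_range (y := τ ∘ y) (hτ.comp Sum.inr_injective),
      Fintype.card_fin, Fintype.card_fin, Nat.descFactorial_eq_factorial_mul_choose]
    push_cast
    ring
  have key := Perm.card_embedding_mul_toOuterMeasure_graphPerms_le hinv hτ hi
  rw [Perm.toOuterMeasure_graphPerms_eq hinv D hinj hτ, hcard, comp_apply, swap_apply_left] at key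
  have hpos : ((n - p).choose p : ℝ≥0∞) * p.factorial ≠ 0 :=
    mul_ne_zero (by exact_mod_cast (Nat.choose_pos (by omega)).ne')
      (by exact_mod_cast p.factorial_ne_zero)
  rw [ENNReal.le_div_iff_mul_le (.inl hpos) (.inl (by finiteness)), mul_comm]
  exact key
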